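/- arXiv:1406.2225 — 6 statements merged into one kernel-verified Lean document; each statement's English description precedes it below -/
import Mathlib

section
/- Let 0 ≤ b < k and m ≥ 2k−b. If H is a k-uniform hypergraph on m vertices with more than C(m,k−1) edges, then H contains two edges sharing exactly b vertices. -/
/-!
Induction on `b`. For `b = 0` the family is intersecting, and Erdős–Ko–Rado bounds it by
`C(m - 1, k - 1)`. For `b > 0`, the link of a vertex `v` is a `(k - 1)`-uniform family on `m - 1`
vertices in which no two edges share exactly `b - 1` vertices, so by induction `v` has degree at
most `C(m - 1, k - 2)`. Double counting vertex-edge incidences then gives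
`k |E| ≤ m C(m - 1, k - 2) = (k - 1) C(m, k - 1)`.
-/

open Finset

section

variable {α : Type*} [DecidableEq α]

theorem Finset.erdos_ko_rado_fintype [Fintype α] {𝒜 : Finset (Finset α)} {r : ℕ}
    (h𝒜 : (𝒜 : Set (Finset α)).Intersecting) (hr : (𝒜 : Set (Finset α)).Sized r)
    (hcard : 2 * r ≤ Fintype.card α) :
    #𝒜 ≤ (Fintype.card α - 1).choose (r - 1) := by
  let ι := (mapEmbedding (Fintype.equivFin α).toEmbedding).toEmbedding
  have hint : ((𝒜.map ι : Finset _) : Set (Finset (Fin (Fintype.card α)))).Intersecting := by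
    simp only [coe_map]
    rintro _ ⟨s, hs, rfl⟩ _ ⟨t, ht, rfl⟩
    simpa [ι, disjoint_map] using h𝒜 hs ht
  have hsized : ((𝒜.map ι : Finset _) : Set (Finset (Fin (Fintype.card α)))).Sized r := by
    simp only [coe_map]
    rintro _ ⟨s, hs, rfl⟩
    simpa [ι] using hr hs
  simpa using erdos_ko_rado hint hsized (by omega)

theorem Set.Sized.mul_card_le_card_mul [Fintype α] {𝒜 : Finset (Finset α)} {r d : ℕ}
    (hr : (𝒜 : Set (Finset α)).Sized r) (hd : ∀ a, #{s ∈ 𝒜 | a ∈ s} ≤ d) :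
    r * #𝒜 ≤ Fintype.card α * d := by
  calc r * #𝒜 = ∑ s ∈ 𝒜, #s := by
        rw [sum_congr rfl fun s hs => hr hs, sum_const, smul_eq_mul, mul_comm]
    _ ≤ Fintype.card α * d := sum_card_le hd

/-- The link lives on the ground type with `v` deleted, so that it has one vertex fewer. -/
def Finset.link (𝒜 : Finset (Finset α)) (v : α) : Finset (Finset {x // x ≠ v}) :=
  {s ∈ 𝒜 | v ∈ s}.image (Finset.subtype (· ≠ v))

theorem Finset.card_subtype_ne (s : Finset α) (v : α) : #(s.subtype (· ≠ v)) = #(s.erase v) := by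
  rw [card_subtype, filter_ne']

theorem Finset.card_link (𝒜 : Finset (Finset α)) (v : α) : #(𝒜.link v) = #{s ∈ 𝒜 | v ∈ s} := by
  refine card_image_of_injOn fun s hs t ht hst => ?_
  simp only [coe_filter, Set.mem_ofPred_eq] at hs ht
  have : s.erase v = t.erase v := by
    rw [← filter_ne', ← filter_ne', ← subtype_map, ← subtype_map]
    exact congrArg _ hst
  rw [← insert_erase hs.2, ← insert_erase ht.2, this]

theorem Set.Sized.link {𝒜 : Finset (Finset α)} {r : ℕ} (hr : (𝒜 : Set (Finset α)).Sized r)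
    (v : α) : ((𝒜.link v : Finset _) : Set (Finset {x // x ≠ v})).Sized (r - 1) := by
  intro _ hs
  simp only [Finset.link, coe_image, coe_filter, Set.mem_image, Set.mem_ofPred_eq] at hs
  obtain ⟨s, ⟨hs, hv⟩, rfl⟩ := hs
  rw [card_subtype_ne, card_erase_of_mem hv, hr hs]

theorem Finset.pairwise_card_inter_link_ne {𝒜 : Finset (Finset α)} {b : ℕ}
    (h𝒜 : (𝒜 : Set (Finset α)).Pairwise fun s t => #(s ∩ t) ≠ b + 1) (v : α) :
    ((𝒜.link v : Finset _) : Set (Finset {x // x ≠ v})).Pairwise fun s t => #(s ∩ t) ≠ b := by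
  simp only [Finset.link, coe_image, coe_filter]
  rintro _ ⟨s, ⟨hs, hvs⟩, rfl⟩ _ ⟨t, ⟨ht, hvt⟩, rfl⟩ hne
  have hst : s ≠ t := by rintro rfl; exact hne rfl
  have hinter : s.subtype (· ≠ v) ∩ t.subtype (· ≠ v) = (s ∩ t).subtype (· ≠ v) := by
    ext; simp
  have hv : v ∈ s ∩ t := mem_inter.2 ⟨hvs, hvt⟩
  rw [hinter, card_subtype_ne, card_erase_of_mem hv]
  have := card_pos.2 ⟨v, hv⟩
  have := h𝒜 hs ht hst
  omega

theorem Finset.card_le_choose_of_pairwise_card_inter_ne [Fintype α] {𝒜 : Finset (Finset α)}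
    {k b : ℕ} (hb : b < k) (hcard : 2 * k - b ≤ Fintype.card α)
    (hk : (𝒜 : Set (Finset α)).Sized k)
    (h𝒜 : (𝒜 : Set (Finset α)).Pairwise fun s t => #(s ∩ t) ≠ b) :
    #𝒜 ≤ (Fintype.card α).choose (k - 1) := by
  induction b generalizing α k with
  | zero =>
    have hint : (𝒜 : Set (Finset α)).Intersecting := by
      intro s hs t ht
      rw [not_disjoint_iff_nonempty_inter, ← card_pos]
      rcases eq_or_ne s t with rfl | hst
      · rw [inter_self, hk hs]
        exact hb
      · exact Nat.pos_of_ne_zero (h𝒜 hs ht hst)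
    exact (erdos_ko_rado_fintype hint hk (by omega)).trans
      (Nat.choose_le_choose _ (Nat.sub_le _ _))
  | succ b ih =>
    set n := Fintype.card α
    have hdeg : ∀ v, #{s ∈ 𝒜 | v ∈ s} ≤ (n - 1).choose (k - 2) := by
      intro v
      have hcard' : Fintype.card {x // x ≠ v} = n - 1 := by
        simp [Fintype.card_subtype_compl, n]
      rw [← card_link, ← hcard', show k - 2 = k - 1 - 1 by omega]
      exact ih (by omega) (by omega) (hk.link v) (pairwise_card_inter_link_ne h𝒜 v)
    have hpascal : n * (n - 1).choose (k - 2) = n.choose (k - 1) * (k - 1) := by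
      obtain ⟨n', hn'⟩ : ∃ n', n = n' + 1 := ⟨n - 1, by omega⟩
      obtain ⟨k', hk'⟩ : ∃ k', k = k' + 2 := ⟨k - 2, by omega⟩
      subst hk'
      rw [hn']
      exact Nat.add_one_mul_choose_eq n' k'
    refine Nat.le_of_mul_le_mul_left ?_ (by omega : 0 < k)
    calc k * #𝒜 ≤ n * (n - 1).choose (k - 2) := hk.mul_card_le_card_mul hdeg
      _ = n.choose (k - 1) * (k - 1) := hpascal
      _ ≤ k * n.choose (k - 1) := by rw [mul_comm]; exact Nat.mul_le_mul_right _ (Nat.sub_le _ _)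

end

/-- If a `k`-uniform hypergraph on `m ≥ 2k−b` vertices (`0 ≤ b < k`) has more than
`C(m, k−1)` edges, then it contains two edges sharing exactly `b` vertices. -/
theorem exists_Ykb_of_card_gt {V : Type*} [Fintype V] [DecidableEq V]
    (k b m : ℕ) (hb : b < k) (hm : 2 * k - b ≤ m)
    (hV : Fintype.card V = m)
    (E : Finset (Finset V)) (hE : ∀ e ∈ E, e.card = k)
    (hcard : m.choose (k - 1) < E.card) :
    ∃ e ∈ E, ∃ f ∈ E, e ≠ f ∧ (e ∩ f).card = b := by
  subst hV
  by_contra! h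
  exact (card_le_choose_of_pairwise_card_inter_ne hb hm (fun e he => hE e he)
    (fun e he f hf hne => h e he f hf hne)).not_gt hcard
end

section
/- Fix integers k ≥ 3 and 1 ≤ ℓ < k with (k−ℓ) not dividing k (equivalently for ℓ<k/2: any ℓ with 1≤ℓ<k/2). Let a = ⌈k/(k−ℓ)⌉·(k−ℓ) and let n be divisible by k−ℓ. Define the k-graph H₀ on vertex set V = A ∪ B where |A| = ⌈n/a⌉ − 1, and E(H₀) consists of all k-subsets of V intersecting A. Then H₀ contains no Hamilton ℓ-cycle, i.e., no spanning sub-hypergraph that is an ℓ-cycle on n vertices. -/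
/-- The edges of a `k`-uniform `ℓ`-cycle on `n` vertices. -/
def cycleEdges (n k l : ℕ) {V : Type*} [DecidableEq V] (f : ZMod n → V) :
    Finset (Finset V) :=
  (Finset.range (n / (k - l))).image
    (fun i => (Finset.range k).image (fun j => f ((i * (k - l) + j : ℕ) : ZMod n)))

/-- A `k`-graph with edge set `E` on an `n`-vertex type `V` has a Hamilton `ℓ`-cycle if
there is a cyclic ordering of the vertices such that all edges of the corresponding
`ℓ`-cycle belong to `E`. -/
def HasHamiltonLCycle (n k l : ℕ) {V : Type*} [DecidableEq V]
    (E : Finset (Finset V)) : Prop :=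
  ∃ f : ZMod n ≃ V, cycleEdges n k l (f : ZMod n → V) ⊆ E

/-!
Write `d = k − ℓ` and `m = n/d`. The `i`-th edge of an `ℓ`-cycle consists of the positions
`i·d, …, i·d + k − 1`, so a fixed position is covered only by edges whose offsets
`j < k` all lie in one residue class mod `d`: every vertex lies in at most `c = ⌈k/d⌉` edges.
If every one of the `m` edges meets `A`, double counting gives `m ≤ c·|A|`, whereas
`c·d·|A| = a·(⌈n/a⌉ − 1) < n = m·d`.
-/

open Finset

lemma card_filter_range_mod_eq_le {d : ℕ} (hd : 0 < d) (k r : ℕ) :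
    #{t ∈ range k | t % d = r} ≤ (k + d - 1) / d := by
  calc #{t ∈ range k | t % d = r} ≤ #(range ((k + d - 1) / d)) :=
        card_le_card_of_injOn (· / d) ?_ ?_
    _ = (k + d - 1) / d := card_range _
  · intro t ht
    simp only [mem_coe, mem_filter, mem_range] at ht ⊢
    have h1 : t / d ≤ (k - 1) / d := Nat.div_le_div_right (by omega)
    have h2 : (k - 1 + d) / d = (k - 1) / d + 1 := Nat.add_div_right _ hd
    rw [show k + d - 1 = k - 1 + d by omega]
    omega
  · intro t ht t' ht' h
    simp only [mem_coe, mem_filter] at ht ht'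
    rw [← Nat.div_add_mod t d, ← Nat.div_add_mod t' d, ht.2, ht'.2]
    exact congrArg (d * · + r) h

lemma card_filter_exists_natCast_eq_le {n d k : ℕ} (hd : 0 < d) (hdn : d ∣ n) (hkn : k ≤ n)
    (x : ZMod n) :
    #{i ∈ range (n / d) | ∃ j < k, ((i * d + j : ℕ) : ZMod n) = x} ≤ (k + d - 1) / d := by
  calc #{i ∈ range (n / d) | ∃ j < k, ((i * d + j : ℕ) : ZMod n) = x}
      ≤ #{t ∈ range k | t % d = x.val % d} :=
        card_le_card_of_injOn (fun i => (x - ((i * d : ℕ) : ZMod n)).val) ?_ ?_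
    _ ≤ (k + d - 1) / d := card_filter_range_mod_eq_le hd k _
  · intro i hi
    simp only [mem_coe, mem_filter, mem_range] at hi ⊢
    obtain ⟨-, j, hjk, rfl⟩ := hi
    have hsub : ((i * d + j : ℕ) : ZMod n) - ((i * d : ℕ) : ZMod n) = j := by push_cast; ring
    rw [hsub, ZMod.val_natCast, ZMod.val_natCast, Nat.mod_eq_of_lt (hjk.trans_le hkn),
      Nat.mod_mod_of_dvd _ hdn, Nat.mul_comm, Nat.mul_add_mod]
    exact ⟨hjk, rfl⟩
  · intro i hi i' hi' h
    simp only [mem_coe, mem_filter, mem_range] at hi hi'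
    have : NeZero n := ⟨by rintro rfl; simp at hi⟩
    have hlt {i : ℕ} (hi : i < n / d) : i * d < n := by
      have := (Nat.lt_div_iff_mul_lt hd).mp hi; omega
    have hcast : ((i * d : ℕ) : ZMod n) = ((i' * d : ℕ) : ZMod n) :=
      sub_right_injective (ZMod.val_injective _ h)
    rw [ZMod.natCast_eq_natCast_iff', Nat.mod_eq_of_lt (hlt hi.1),
      Nat.mod_eq_of_lt (hlt hi'.1)] at hcast
    exact Nat.eq_of_mul_eq_mul_right hd hcast

lemma add_sub_one_div_sub_one_mul_lt {n : ℕ} (hn : 0 < n) (a : ℕ) :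
    ((n + a - 1) / a - 1) * a < n := by
  have := Nat.div_mul_le_self (n + a - 1) a
  rw [Nat.sub_one_mul]
  omega

section CycleEdge

variable {V : Type*} [DecidableEq V] {n : ℕ}

def cycleEdge (n k d : ℕ) (f : ZMod n → V) (i : ℕ) : Finset V :=
  (range k).image fun j => f ((i * d + j : ℕ) : ZMod n)

lemma cycleEdges_eq_image (k l : ℕ) (f : ZMod n → V) :
    cycleEdges n k l f = (range (n / (k - l))).image (cycleEdge n k (k - l) f) :=
  rfl

lemma mem_cycleEdge_iff {k d i : ℕ} (f : ZMod n ≃ V) (v : V) :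
    v ∈ cycleEdge n k d f i ↔ ∃ j < k, ((i * d + j : ℕ) : ZMod n) = f.symm v := by
  simp only [cycleEdge, mem_image, mem_range, ← f.eq_symm_apply]

lemma card_filter_mem_cycleEdge_le {k d : ℕ} (hd : 0 < d) (hdn : d ∣ n) (hkn : k ≤ n)
    (f : ZMod n ≃ V) (v : V) :
    #{i ∈ range (n / d) | v ∈ cycleEdge n k d f i} ≤ (k + d - 1) / d := by
  simpa only [mem_cycleEdge_iff] using card_filter_exists_natCast_eq_le hd hdn hkn (f.symm v)

end CycleEdge

theorem extremal_construction_no_hamilton_cycle_general {V : Type*} [Fintype V] [DecidableEq V]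
    (n k l : ℕ) (hlk : 2 * l < k)
    (hdvd : (k - l) ∣ n)
    (a : ℕ) (ha : a = ((k + (k - l) - 1) / (k - l)) * (k - l))
    (A : Finset V) (hA : A.card = (n + a - 1) / a - 1) :
    ¬ HasHamiltonLCycle n k l
        ((Finset.univ.powersetCard k).filter (fun e => (e ∩ A).Nonempty)) := by
  rintro ⟨f, hsub⟩
  set d := k - l
  set c := (k + d - 1) / d
  have hd : 0 < d := by omega
  have hV : Fintype.card V = n := by
    rw [← Nat.card_eq_fintype_card, ← Nat.card_congr f, Nat.card_zmod]
  have hn : 0 < n := hV ▸ Fintype.card_pos_iff.mpr ⟨f 0⟩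
  have hedge {i : ℕ} (hi : i ∈ range (n / d)) :
      #(cycleEdge n k d f i) = k ∧ (cycleEdge n k d f i ∩ A).Nonempty := by
    simpa using hsub (cycleEdges_eq_image k l f ▸ mem_image_of_mem _ hi)
  have hkn : k ≤ n := by
    have h0 : 0 ∈ range (n / d) := mem_range.mpr (Nat.div_pos (Nat.le_of_dvd hn hdvd) hd)
    exact hV ▸ (hedge h0).1 ▸ card_le_univ _
  have hcount : #(range (n / d)) * 1 ≤ #A * c :=
    card_mul_le_card_mul (fun i v => v ∈ cycleEdge n k d f i)
      (fun i hi => by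
        obtain ⟨v, hv⟩ := (hedge hi).2
        exact card_pos.mpr ⟨v, by simpa [bipartiteAbove, and_comm] using hv⟩)
      (fun v _ => card_filter_mem_cycleEdge_le hd hdvd hkn f v)
  have hlt : #A * c * d < n / d * d := by
    rw [hA, Nat.div_mul_cancel hdvd, mul_assoc, ← ha]
    exact add_sub_one_div_sub_one_mul_lt hn a
  rw [card_range, mul_one] at hcount
  exact absurd (Nat.lt_of_mul_lt_mul_right hlt) hcount.not_gt

/-- The space barrier: for `1 ≤ ℓ < k/2`, `a = ⌈k/(k−ℓ)⌉·(k−ℓ)` and `k−ℓ ∣ n`, the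
`k`-graph on `n` vertices whose edges are all `k`-sets meeting a fixed set `A` of
`⌈n/a⌉ − 1` vertices has no Hamilton `ℓ`-cycle. -/
theorem extremal_construction_no_hamilton_cycle {V : Type*} [Fintype V] [DecidableEq V]
    (n k l : ℕ) (hk : 3 ≤ k) (hl : 1 ≤ l) (hlk : 2 * l < k)
    (hdvd : (k - l) ∣ n) (hV : Fintype.card V = n)
    (a : ℕ) (ha : a = ((k + (k - l) - 1) / (k - l)) * (k - l))
    (A : Finset V) (hA : A.card = (n + a - 1) / a - 1) :
    ¬ HasHamiltonLCycle n k l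
        ((Finset.univ.powersetCard k).filter (fun e => (e ∩ A).Nonempty)) :=
  extremal_construction_no_hamilton_cycle_general n k l hlk hdvd a ha A hA
end

section
/- Let k ≥ 3 and 1 ≤ ℓ < k/2, and let P be a canonical ℓ-path with q edges with respect to parts (V_1,...,V_k) where q is odd. Then for every index j with j > 2ℓ, |V(P) ∩ V_j| = q, and for every j ≤ 2ℓ, |V(P) ∩ V_j| = (q+1)/2. -/
/-- Let `P` be a canonical `ℓ`-path with an odd number `q` of edges in a `k`-partite
`k`-graph with pairwise disjoint parts `V_0,…,V_{k−1}` (`k ≥ 3`, `1 ≤ ℓ < k/2`); the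
path is given by an injective sequence `v` of `ℓ + q(k−ℓ)` vertices, its `i`-th edge
`e_i = {v_{i(k−ℓ)},…,v_{i(k−ℓ)+k−1}}` has exactly one vertex in each part, and each
consecutive intersection lies entirely in the first `ℓ` parts or entirely in the next
`ℓ` parts.  Then `|V(P) ∩ V_j| = q` for every part index `j ≥ 2ℓ`, and
`|V(P) ∩ V_j| = (q+1)/2` for every `j < 2ℓ`. -/
theorem canonical_lPath_part_counts {α : Type*} [DecidableEq α]
    (k l q : ℕ) (hk : 3 ≤ k) (hl : 1 ≤ l) (hlk : 2 * l < k)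
    (hq : Odd q) (hq1 : 1 ≤ q)
    (V : ℕ → Finset α) (v : ℕ → α)
    (hdisj : ∀ i < k, ∀ j < k, i ≠ j → Disjoint (V i) (V j))
    (hinj : ∀ i < l + q * (k - l), ∀ j < l + q * (k - l), v i = v j → i = j)
    (hcross : ∀ i < q, ∀ p < k,
      (((Finset.range k).image (fun j => v (i * (k - l) + j))) ∩ V p).card = 1)
    (hcanon : ∀ i, i + 1 < q →
      (∀ j, (i + 1) * (k - l) ≤ j → j < (i + 1) * (k - l) + l →
          v j ∈ (Finset.range l).biUnion V) ∨
      (∀ j, (i + 1) * (k - l) ≤ j → j < (i + 1) * (k - l) + l →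
          v j ∈ (Finset.Ico l (2 * l)).biUnion V)) :
    (∀ j, 2 * l ≤ j → j < k →
      (((Finset.range (l + q * (k - l))).image v) ∩ V j).card = q) ∧
    (∀ j < 2 * l,
      (((Finset.range (l + q * (k - l))).image v) ∩ V j).card = (q + 1) / 2) := by
  classical
  set s := k - l with hs_def
  have hls : l + 1 ≤ s := by omega
  have hks : k = s + l := by omega
  -- every in-edge index is below the total length
  have hedge_lt : ∀ i, i < q → ∀ jj, jj < k → i * s + jj < l + q * s := by
    intro i hi jj hjj
    have h1 : (i + 1) * s ≤ q * s := Nat.mul_le_mul_right s (by omega)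
    have h2 : (i + 1) * s = i * s + s := by ring
    omega
  -- a vertex lies in at most one part
  have hpart : ∀ x : α, ∀ p1, p1 < k → ∀ p2, p2 < k → x ∈ V p1 → x ∈ V p2 → p1 = p2 := by
    intro x p1 hp1 p2 hp2 h1 h2
    by_contra hne
    exact (Finset.disjoint_left.mp (hdisj p1 hp1 p2 hp2 hne)) h1 h2
  -- uniqueness of the in-edge position hitting a given part
  have huniq : ∀ i, i < q → ∀ p, p < k → ∀ j1, j1 < k → ∀ j2, j2 < k →
      v (i * s + j1) ∈ V p → v (i * s + j2) ∈ V p → j1 = j2 := by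
    intro i hi p hp j1 hj1 j2 hj2 h1 h2
    obtain ⟨w, hw⟩ := Finset.card_eq_one.mp (hcross i hi p hp)
    have m1 : v (i * s + j1) ∈ ((Finset.range k).image (fun j => v (i * s + j))) ∩ V p :=
      Finset.mem_inter.mpr ⟨Finset.mem_image.mpr ⟨j1, Finset.mem_range.mpr hj1, rfl⟩, h1⟩
    have m2 : v (i * s + j2) ∈ ((Finset.range k).image (fun j => v (i * s + j))) ∩ V p :=
      Finset.mem_inter.mpr ⟨Finset.mem_image.mpr ⟨j2, Finset.mem_range.mpr hj2, rfl⟩, h2⟩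
    rw [hw, Finset.mem_singleton] at m1 m2
    have := hinj (i * s + j1) (hedge_lt i hi j1 hj1) (i * s + j2) (hedge_lt i hi j2 hj2)
      (m1.trans m2.symm)
    omega
  -- choose the in-edge position for each edge/part
  have hex : ∀ i p : ℕ, ∃ jj, jj < k ∧ (i < q → p < k → v (i * s + jj) ∈ V p) := by
    intro i p
    by_cases h : i < q ∧ p < k
    · obtain ⟨w, hw⟩ := Finset.card_eq_one.mp (hcross i h.1 p h.2)
      have hww : w ∈ ((Finset.range k).image (fun j => v (i * s + j))) ∩ V p := by
        rw [hw]; exact Finset.mem_singleton_self w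
      obtain ⟨hw1, hw2⟩ := Finset.mem_inter.mp hww
      obtain ⟨jj, hjj, hvjj⟩ := Finset.mem_image.mp hw1
      exact ⟨jj, Finset.mem_range.mp hjj, fun _ _ => by rw [hvjj]; exact hw2⟩
    · exact ⟨0, by omega, fun h1 h2 => absurd ⟨h1, h2⟩ h⟩
  choose f hfk hfm using hex
  -- the global index of the vertex of edge i in part p
  set g : ℕ → ℕ → ℕ := fun i p => i * s + f i p with hg_def
  have hg_lb : ∀ i p, i * s ≤ g i p := fun i p => Nat.le_add_right _ _
  have hg_ub : ∀ i p, g i p < i * s + k := fun i p => by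
    have := hfk i p; simp only [hg_def]; omega
  have hg_lt : ∀ i, i < q → ∀ p, g i p < l + q * s := fun i hi p =>
    hedge_lt i hi (f i p) (hfk i p)
  have hg_mem : ∀ i, i < q → ∀ p, p < k → v (g i p) ∈ V p := fun i hi p hp => hfm i p hi hp
  -- uniqueness characterization of g
  have hg_unique : ∀ i, i < q → ∀ p, p < k → ∀ t, i * s ≤ t → t < i * s + k →
      v t ∈ V p → t = g i p := by
    intro i hi p hp t h1 h2 hmem
    obtain ⟨jj, rfl⟩ : ∃ jj, t = i * s + jj := ⟨t - i * s, by omega⟩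
    have hjj : jj < k := by omega
    have := huniq i hi p hp jj hjj (f i p) (hfk i p) hmem (hg_mem i hi p hp)
    simp only [hg_def]; omega
  -- decomposition of any index into edge + offset
  have hdecomp : ∀ t, t < l + q * s → ∃ i, i < q ∧ ∃ jj, jj < k ∧ t = i * s + jj := by
    intro t ht
    by_cases h : t < q * s
    · refine ⟨t / s, ?_, t % s, ?_, ?_⟩
      · exact Nat.div_lt_iff_lt_mul (by omega) |>.mpr (by omega)
      · have := Nat.mod_lt t (show 0 < s by omega); omega
      · have h := Nat.div_add_mod t s
        have h2 : t / s * s = s * (t / s) := Nat.mul_comm _ _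
        omega
    · refine ⟨q - 1, by omega, t - (q - 1) * s, ?_, ?_⟩ <;>
      · have h2 : (q - 1) * s + s = q * s := by
          have : q - 1 + 1 = q := by omega
          calc (q - 1) * s + s = (q - 1 + 1) * s := by ring
            _ = q * s := by rw [this]
        omega
  -- the vertex set meets V p exactly in the g i p's
  have himage : ∀ p, p < k →
      ((Finset.range (l + q * s)).image v) ∩ V p
        = (Finset.range q).image (fun i => v (g i p)) := by
    intro p hp
    ext x
    simp only [Finset.mem_inter, Finset.mem_image, Finset.mem_range]
    constructor
    · rintro ⟨⟨t, ht, rfl⟩, hxV⟩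
      obtain ⟨i, hi, jj, hjj, rfl⟩ := hdecomp t ht
      have := hg_unique i hi p hp (i * s + jj) (by omega) (by omega) hxV
      exact ⟨i, hi, by rw [← this]⟩
    · rintro ⟨i, hi, rfl⟩
      exact ⟨⟨g i p, hg_lt i hi p, rfl⟩, hg_mem i hi p hp⟩
  -- vertices of far-apart edges have different indices
  have hfar : ∀ i i' p1 p2 : ℕ, i + 2 ≤ i' → g i p1 ≠ g i' p2 := by
    intro i i' p1 p2 h
    have h1 : (i + 2) * s ≤ i' * s := Nat.mul_le_mul_right s h
    have h2 : (i + 2) * s = i * s + 2 * s := by ring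
    have h3 := hg_ub i p1
    have h4 := hg_lb i' p2
    omega
  -- a merged index lies in the overlap window
  have hconsec : ∀ i p, g i p = g (i + 1) p →
      (i + 1) * s ≤ g i p ∧ g i p < (i + 1) * s + l := by
    intro i p h
    have h1 := hg_lb (i + 1) p
    have h2 := hg_ub i p
    have h3 : (i + 1) * s = i * s + s := by ring
    omega
  -- the dichotomy for each overlap
  have hdichot : ∀ i, i + 1 < q →
      ((∀ p', p' < l → g i p' = g (i + 1) p') ∧
        (∀ p', l ≤ p' → p' < 2 * l → g i p' ≠ g (i + 1) p')) ∨
      ((∀ p', l ≤ p' → p' < 2 * l → g i p' = g (i + 1) p') ∧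
        (∀ p', p' < l → g i p' ≠ g (i + 1) p')) := by
    intro i hi1
    have hi : i < q := by omega
    have hwin : ∀ t, (i + 1) * s ≤ t → t < (i + 1) * s + l →
        (i * s ≤ t ∧ t < i * s + k) ∧ ((i + 1) * s ≤ t ∧ t < (i + 1) * s + k) := by
      intro t h1 h2
      have h3 : (i + 1) * s = i * s + s := by ring
      omega
    -- merging in a window-half given the canonical alternative
    have key : ∀ (B : Finset ℕ), B.card = l → (∀ p' ∈ B, p' < k) →
        (∀ t, (i + 1) * s ≤ t → t < (i + 1) * s + l → v t ∈ B.biUnion V) →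
        ∀ p' ∈ B, g i p' = g (i + 1) p' := by
      intro B hBcard hBk hB p' hp'
      set A : Finset ℕ := Finset.Ico ((i + 1) * s) ((i + 1) * s + l) with hA_def
      have hAcard : A.card = l := by simp [hA_def]
      have hmem : ∀ t ∈ A, ∃ p'', p'' ∈ B ∧ v t ∈ V p'' := by
        intro t ht
        rw [hA_def, Finset.mem_Ico] at ht
        obtain ⟨p'', hp''B, hp''⟩ := Finset.mem_biUnion.mp (hB t ht.1 ht.2)
        exact ⟨p'', hp''B, hp''⟩
      have hsurj := Finset.surj_on_of_inj_on_of_card_le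
        (fun t ht => (hmem t ht).choose)
        (fun t ht => (hmem t ht).choose_spec.1)
        (fun t1 t2 ht1 ht2 heq => by
          have hs1 := (hmem t1 ht1).choose_spec.2
          have hs2 := (hmem t2 ht2).choose_spec.2
          have heq' : (hmem t1 ht1).choose = (hmem t2 ht2).choose := heq
          rw [heq'] at hs1
          have hb1 : (i + 1) * s ≤ t1 ∧ t1 < (i + 1) * s + l := Finset.mem_Ico.mp ht1
          have hb2 : (i + 1) * s ≤ t2 ∧ t2 < (i + 1) * s + l := Finset.mem_Ico.mp ht2
          have hw1 := hwin t1 hb1.1 hb1.2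
          have hw2 := hwin t2 hb2.1 hb2.2
          have hj1 : t1 = i * s + (t1 - i * s) := by omega
          have hj2 : t2 = i * s + (t2 - i * s) := by omega
          have hs1' : v (i * s + (t1 - i * s)) ∈ V ((hmem t2 ht2).choose) := by
            rw [← hj1]; exact hs1
          have hs2' : v (i * s + (t2 - i * s)) ∈ V ((hmem t2 ht2).choose) := by
            rw [← hj2]; exact hs2
          have := huniq i hi _ (hBk _ (hmem _ ht2).choose_spec.1)
            (t1 - i * s) (by omega) (t2 - i * s) (by omega) hs1' hs2'
          omega)
        (by omega)
      obtain ⟨t, ht, hteq⟩ := hsurj p' hp'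
      have htmem : v t ∈ V p' := by rw [hteq]; exact (hmem t ht).choose_spec.2
      rw [hA_def, Finset.mem_Ico] at ht
      have hw := hwin t ht.1 ht.2
      have e1 := hg_unique i hi p' (hBk p' hp') t hw.1.1 hw.1.2 htmem
      have e2 := hg_unique (i + 1) hi1 p' (hBk p' hp') t hw.2.1 hw.2.2 htmem
      omega
    -- non-merging outside the canonical half
    have nkey : ∀ (B : Finset ℕ),
        (∀ t, (i + 1) * s ≤ t → t < (i + 1) * s + l → v t ∈ B.biUnion V) →
        (∀ p'' ∈ B, p'' < k) →
        ∀ p', p' < k → p' ∉ B → g i p' ≠ g (i + 1) p' := by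
      intro B hB hBk p' hp'k hp'B heq
      obtain ⟨h1, h2⟩ := hconsec i p' heq
      obtain ⟨p'', hp''B, hp''⟩ := Finset.mem_biUnion.mp (hB (g i p') h1 h2)
      have := hpart (v (g i p')) p' hp'k p'' (hBk p'' hp''B) (hg_mem i hi p' hp'k) hp''
      exact hp'B (this ▸ hp''B)
    rcases hcanon i hi1 with hc | hc
    · left
      constructor
      · intro p' hp'
        exact key (Finset.range l) (by simp) (fun x hx => by
          rw [Finset.mem_range] at hx; omega) hc p' (Finset.mem_range.mpr hp')
      · intro p' hlp' hp'
        exact nkey (Finset.range l) hc (fun x hx => by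
          rw [Finset.mem_range] at hx; omega) p' (by omega)
          (by rw [Finset.mem_range]; omega)
    · right
      constructor
      · intro p' hlp' hp'
        exact key (Finset.Ico l (2 * l)) (by simp; omega) (fun x hx => by
          rw [Finset.mem_Ico] at hx; omega) hc p' (Finset.mem_Ico.mpr ⟨hlp', hp'⟩)
      · intro p' hp'
        exact nkey (Finset.Ico l (2 * l)) hc (fun x hx => by
          rw [Finset.mem_Ico] at hx; omega) p' (by omega)
          (by rw [Finset.mem_Ico]; omega)
  -- consecutive overlaps alternate
  have halt : ∀ i, i + 2 < q → ∀ p', p' < 2 * l →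
      (g i p' = g (i + 1) p' ↔ ¬ g (i + 1) p' = g (i + 2) p') := by
    intro i hi2 p' hp'
    rcases hdichot i (by omega) with ⟨hm1, hn1⟩ | ⟨hm1, hn1⟩ <;>
      rcases hdichot (i + 1) (by omega) with ⟨hm2, hn2⟩ | ⟨hm2, hn2⟩
    · exact absurd ((hm1 0 (by omega)).trans (hm2 0 (by omega)))
        (hfar i (i + 2) 0 0 (by omega))
    · by_cases hcase : p' < l
      · simp only [hm1 p' hcase, hn2 p' hcase]
        tauto
      · have h1 := hn1 p' (by omega) (by omega)
        have h2 := hm2 p' (by omega) (by omega)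
        tauto
    · by_cases hcase : p' < l
      · have h1 := hn1 p' hcase
        have h2 := hm2 p' hcase
        tauto
      · have h1 := hm1 p' (by omega) (by omega)
        have h2 := hn2 p' (by omega) (by omega)
        tauto
    · exact absurd ((hm1 l (le_refl l) (by omega)).trans (hm2 l (le_refl l) (by omega)))
        (hfar i (i + 2) l l (by omega))
  -- main cardinality computation for a fixed part
  have hcard : ∀ p, p < k →
      ((Finset.range q).image (fun i => v (g i p))).card
        = q - ((Finset.range (q - 1)).filter (fun i => g i p = g (i + 1) p)).card := by
    intro p hp
    set S : Finset ℕ := (Finset.range q).filter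
      (fun i => i = 0 ∨ g (i - 1) p ≠ g i p) with hS_def
    have hfirst : ∀ i, i < q → ∃ i' ∈ S, g i' p = g i p := by
      intro i
      induction i using Nat.strong_induction_on with
      | _ i ih =>
        intro hi
        by_cases h : i = 0 ∨ g (i - 1) p ≠ g i p
        · exact ⟨i, Finset.mem_filter.mpr ⟨Finset.mem_range.mpr hi, h⟩, rfl⟩
        · push_neg at h
          obtain ⟨i', hi'S, hi'⟩ := ih (i - 1) (by omega) (by omega)
          refine ⟨i', hi'S, ?_⟩
          rw [hi', h.2]
    have himg : (Finset.range q).image (fun i => v (g i p)) = S.image (fun i => v (g i p)) := by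
      apply Finset.Subset.antisymm
      · intro x hx
        obtain ⟨i, hi, rfl⟩ := Finset.mem_image.mp hx
        obtain ⟨i', hi'S, hi'⟩ := hfirst i (Finset.mem_range.mp hi)
        exact Finset.mem_image.mpr ⟨i', hi'S, by rw [hi']⟩
      · exact Finset.image_subset_image (Finset.filter_subset _ _)
    have hSinj : Set.InjOn (fun i => v (g i p)) S := by
      have key2 : ∀ i1 ∈ S, ∀ i2 ∈ S, i1 < i2 → g i1 p = g i2 p → False := by
        intro i1 h1 i2 h2 hlt heq
        by_cases hc : i2 = i1 + 1
        · subst hc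
          obtain ⟨_, h2'⟩ := Finset.mem_filter.mp h2
          rcases h2' with h2' | h2'
          · omega
          · simp only [Nat.add_sub_cancel] at h2'
            exact h2' heq
        · exact hfar i1 i2 p p (by omega) heq
      intro i1 h1 i2 h2 heq
      have h1' : i1 ∈ S := h1
      have h2' : i2 ∈ S := h2
      have hq1' : i1 < q := Finset.mem_range.mp (Finset.mem_filter.mp h1').1
      have hq2' : i2 < q := Finset.mem_range.mp (Finset.mem_filter.mp h2').1
      have hgeq : g i1 p = g i2 p :=
        hinj _ (hg_lt i1 hq1' p) _ (hg_lt i2 hq2' p) heq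
      rcases lt_trichotomy i1 i2 with h | h | h
      · exact absurd hgeq (fun he => key2 i1 h1' i2 h2' h he)
      · exact h
      · exact absurd hgeq.symm (fun he => key2 i2 h2' i1 h1' h he)
    rw [himg, Finset.card_image_of_injOn hSinj]
    -- the complement of S in range q is the shifted merge set
    have hcompl : (Finset.range q).filter (fun i => ¬ (i = 0 ∨ g (i - 1) p ≠ g i p))
        = ((Finset.range (q - 1)).filter (fun i => g i p = g (i + 1) p)).image (· + 1) := by
      ext i
      simp only [Finset.mem_filter, Finset.mem_range, Finset.mem_image, not_or, not_ne_iff]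
      constructor
      · rintro ⟨hi, hi0, heq⟩
        exact ⟨i - 1, ⟨by omega, by rw [show i - 1 + 1 = i by omega]; exact heq⟩, by omega⟩
      · rintro ⟨i0, ⟨hi0, heq⟩, rfl⟩
        exact ⟨by omega, by omega, by simp only [Nat.add_sub_cancel]; exact heq⟩
    have hsum := Finset.card_filter_add_card_filter_not
      (s := Finset.range q) (p := fun i => i = 0 ∨ g (i - 1) p ≠ g i p)
    rw [hcompl] at hsum
    rw [Finset.card_image_of_injective _ (fun a b => by omega)] at hsum
    rw [Finset.card_range, ← hS_def] at hsum
    omega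
  constructor
  · -- parts with index ≥ 2l : no merging, count is q
    intro j h2l hjk
    rw [himage j hjk]
    have hinj2 : Set.InjOn (fun i => v (g i j)) (Finset.range q) := by
      have key2 : ∀ i1 i2, i1 < q → i2 < q → i1 < i2 → g i1 j = g i2 j → False := by
        intro i1 i2 h1 h2 hlt heq
        by_cases hc : i2 = i1 + 1
        · subst hc
          obtain ⟨hw1, hw2⟩ := hconsec i1 j heq
          rcases hcanon i1 h2 with hc' | hc'
          · obtain ⟨p'', hp''B, hp''⟩ := Finset.mem_biUnion.mp (hc' (g i1 j) hw1 hw2)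
            rw [Finset.mem_range] at hp''B
            have := hpart (v (g i1 j)) j hjk p'' (by omega)
              (hg_mem i1 h1 j hjk) hp''
            omega
          · obtain ⟨p'', hp''B, hp''⟩ := Finset.mem_biUnion.mp (hc' (g i1 j) hw1 hw2)
            rw [Finset.mem_Ico] at hp''B
            have := hpart (v (g i1 j)) j hjk p'' (by omega)
              (hg_mem i1 h1 j hjk) hp''
            omega
        · exact hfar i1 i2 j j (by omega) heq
      intro i1 h1 i2 h2 heq
      simp only [Finset.coe_range, Set.mem_Iio] at h1 h2
      have hgeq : g i1 j = g i2 j := hinj _ (hg_lt i1 h1 j) _ (hg_lt i2 h2 j) heq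
      rcases lt_trichotomy i1 i2 with h | h | h
      · exact (key2 i1 i2 h1 h2 h hgeq).elim
      · exact h
      · exact (key2 i2 i1 h2 h1 h hgeq.symm).elim
    rw [Finset.card_image_of_injOn hinj2, Finset.card_range]
  · -- parts with index < 2l : alternating merges, count is (q+1)/2
    intro j hj
    have hjk : j < k := by omega
    rw [himage j hjk, hcard j hjk]
    obtain ⟨m, hm⟩ := hq
    have hq2m : q - 1 = 2 * m := by omega
    -- count the merges: exactly m of them
    have hMcard : ((Finset.range (q - 1)).filter (fun i => g i j = g (i + 1) j)).card = m := by
      rw [hq2m]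
      have hr : Finset.range (2 * m) = (Finset.range m).biUnion
          (fun r => {2 * r, 2 * r + 1}) := by
        ext t
        simp only [Finset.mem_range, Finset.mem_biUnion, Finset.mem_insert,
          Finset.mem_singleton]
        constructor
        · intro ht; exact ⟨t / 2, by omega, by omega⟩
        · rintro ⟨r, hr, h | h⟩ <;> omega
      rw [hr, Finset.filter_biUnion]
      rw [Finset.card_biUnion (by
        intro r1 h1 r2 h2 hne
        apply Finset.disjoint_filter_filter
        rw [Finset.disjoint_left]
        intro a ha hb
        simp only [Finset.mem_insert, Finset.mem_singleton] at ha hb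
        omega)]
      have hone : ∀ r ∈ Finset.range m,
          (({2 * r, 2 * r + 1} : Finset ℕ).filter (fun i => g i j = g (i + 1) j)).card = 1 := by
        intro r hr
        rw [Finset.mem_range] at hr
        have h1 := halt (2 * r) (by omega) j hj
        have hpair : ({2 * r, 2 * r + 1} : Finset ℕ) = insert (2 * r) {2 * r + 1} := rfl
        rw [hpair, Finset.filter_insert, Finset.filter_singleton]
        by_cases hc : g (2 * r) j = g (2 * r + 1) j
        · have hc2 : ¬ g (2 * r + 1) j = g (2 * r + 1 + 1) j := by
            have := h1.mp hc
            convert this using 3 <;> omega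
          rw [if_pos hc, if_neg (by convert hc2 using 3 <;> omega)]
          simp
        · have hc2 : g (2 * r + 1) j = g (2 * r + 1 + 1) j := by
            by_contra hcon
            exact hc (h1.mpr (by convert hcon using 3 <;> omega))
          rw [if_neg hc, if_pos (by convert hc2 using 3 <;> omega)]
          simp
      rw [Finset.sum_congr rfl hone, Finset.sum_const, Finset.card_range, smul_eq_mul, mul_one]
    rw [hMcard]
    omega
end

section
/- Let k ≥ 3 and 1 ≤ b < k, and let H be a k-graph on n vertices. Suppose 𝒴 = {Y_1,...,Y_m} is a maximum Y_{k,b}-tiling of H, U is the set of vertices not covered by 𝒴, and C is the set of covered vertices v with deg(v, U) ≥ (2k−b)²·C(|U|, k−2), where |U| ≥ 2(2k−b)². Then every member Y_i of 𝒴 contains at most one vertex of C. -/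
/-!
If two vertices `x ≠ y` of one member `p` of the tiling had large degree into the uncovered set
`U`, each link would be a dense `(k - 1)`-uniform family on `U`, hence would contain two sets
`A, B` meeting in exactly `b - 1` vertices: by pigeonhole some `(b - 1)`-set `S` lies in many link
sets, and since few of them meet `A \ S`, some `B ⊇ S` avoids it. The link of `y` stays dense
after deleting the `2k - b - 1` vertices used at `x`, so `x` and `y` carry two disjoint copies of
`Y_{k,b}` inside `p ∪ U`; replacing `p` by them enlarges the tiling.
-/

open Finset

namespace Nat

theorem pow_add_le_three_mul_pow {a e t : ℕ} (h : t * e ≤ a) : (a + e) ^ t ≤ 3 * a ^ t := by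
  obtain rfl | ha := a.eq_zero_or_pos
  · rcases Nat.mul_eq_zero.mp (Nat.le_zero.mp h) with rfl | rfl
    · simp
    · rw [add_zero]; omega
  have ha' : (0 : ℝ) < a := by exact_mod_cast ha
  have hexp : ((e : ℝ) / a + 1) ^ t ≤ 3 :=
    calc ((e : ℝ) / a + 1) ^ t
        ≤ Real.exp (e / a) ^ t := pow_le_pow_left₀ (by positivity) (Real.add_one_le_exp _) t
      _ = Real.exp (t * (e / a)) := (Real.exp_nat_mul _ _).symm
      _ ≤ Real.exp 1 := by
        rw [Real.exp_le_exp, mul_div_assoc', div_le_one ha']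
        exact_mod_cast h
      _ ≤ 3 := (Real.exp_one_lt_d9.trans (by norm_num)).le
  have hsplit : ((a + e : ℕ) : ℝ) ^ t = (a : ℝ) ^ t * ((e : ℝ) / a + 1) ^ t := by
    rw [← mul_pow]; congr 1; push_cast; field_simp; ring
  have : ((a + e : ℕ) : ℝ) ^ t ≤ 3 * (a : ℝ) ^ t := by
    rw [hsplit]; nlinarith [pow_pos ha' t]
  exact_mod_cast this

theorem choose_le_three_mul_choose_sub {w s t : ℕ} (h : (s + t) ^ 2 ≤ w) :
    w.choose t ≤ 3 * (w - s).choose t := by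
  obtain rfl | ht := t.eq_zero_or_pos
  · simp
  have hst : s + t ≤ w := (Nat.le_self_pow two_ne_zero _).trans h
  set a := w - s + 1 - t
  have hw : a + (s + t - 1) = w := by omega
  have hta : t * (s + t - 1) ≤ a := by
    obtain ⟨n, hn⟩ : ∃ n, s + t = n + 1 := ⟨s + t - 1, by omega⟩
    have : t * n + n + 1 ≤ (n + 1) ^ 2 := by nlinarith
    rw [show s + t - 1 = n by omega]
    rw [hn] at h
    omega
  refine Nat.le_of_mul_le_mul_left ?_ t.factorial_pos
  calc t.factorial * w.choose t
      = w.descFactorial t := (descFactorial_eq_factorial_mul_choose _ _).symm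
    _ ≤ w ^ t := descFactorial_le_pow _ _
    _ ≤ 3 * a ^ t := hw ▸ pow_add_le_three_mul_pow hta
    _ ≤ 3 * (w - s).descFactorial t := Nat.mul_le_mul_left _ (pow_sub_le_descFactorial _ _)
    _ = t.factorial * (3 * (w - s).choose t) := by
      rw [descFactorial_eq_factorial_mul_choose]; ring

theorem choose_mul_mul_choose_lt {w r s : ℕ} (hsr : s < r) (hw : r ^ 2 ≤ w) :
    w.choose s * ((r - s) * w.choose (r - s - 1)) <
      3 * (r + 1) * w.choose (r - 1) * r.choose s := by
  obtain ⟨t, rfl⟩ : ∃ t, r = s + t + 1 := ⟨r - s - 1, by omega⟩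
  have hrw : s + t + 1 ≤ w := (Nat.le_self_pow two_ne_zero _).trans hw
  simp only [show s + t + 1 - s = t + 1 by omega, Nat.add_sub_cancel]
  have hvand : w.choose (s + t) * (s + t).choose s = w.choose s * (w - s).choose t := by
    simpa using Nat.choose_mul (n := w) (k := s + t) (s := s) (by omega)
  have hpascal : (s + t).choose s * (s + t + 1) = (s + t + 1).choose s * (t + 1) := by
    simpa [show s + t + 1 - s = t + 1 by omega] using choose_mul_succ_eq (s + t) s
  have hratio : w.choose t ≤ 3 * (w - s).choose t :=
    choose_le_three_mul_choose_sub ((Nat.pow_le_pow_left (by omega) 2).trans hw)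
  have hpos : 0 < w.choose s * (w - s).choose t :=
    Nat.mul_pos (choose_pos (by omega)) (choose_pos (by omega))
  refine Nat.lt_of_mul_lt_mul_right (a := t + 1) ?_
  calc w.choose s * ((t + 1) * w.choose t) * (t + 1)
      ≤ w.choose s * ((t + 1) * (3 * (w - s).choose t)) * (t + 1) := by gcongr
    _ = 3 * (t + 1) ^ 2 * (w.choose s * (w - s).choose t) := by ring
    _ < 3 * ((s + t + 2) * (s + t + 1)) * (w.choose s * (w - s).choose t) := by
      gcongr; nlinarith
    _ = 3 * (s + t + 2) * w.choose (s + t) * ((s + t).choose s * (s + t + 1)) := by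
      rw [← hvand]; ring
    _ = 3 * (s + t + 1 + 1) * w.choose (s + t) * (s + t + 1).choose s * (t + 1) := by
      rw [hpascal]; ring

end Nat

namespace Finset

variable {α : Type*} [DecidableEq α]

theorem card_filter_powersetCard_superset_le (A W : Finset α) (r : ℕ) :
    #{T ∈ W.powersetCard r | A ⊆ T} ≤ (#W).choose (r - #A) := by
  by_cases h : A ⊆ W ∧ #A ≤ r
  · rw [card_filter_powersetCard_subset A W r h.1 h.2]
    exact Nat.choose_le_choose _ (Nat.sub_le _ _)
  · rw [filter_false_of_mem, card_empty]
    · exact Nat.zero_le _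
    intro T hT hAT
    rw [mem_powersetCard] at hT
    exact h ⟨hAT.trans hT.1, hT.2 ▸ card_le_card hAT⟩

theorem exists_lt_card_filter_superset {W : Finset α} {F : Finset (Finset α)} {r s N : ℕ}
    (hF : F ⊆ W.powersetCard r) (hN : (#W).choose s * N < #F * r.choose s) :
    ∃ S ∈ W.powersetCard s, N < #{e ∈ F | S ⊆ e} := by
  by_contra! h
  refine hN.not_ge ?_
  rw [← card_powersetCard]
  refine card_mul_le_card_mul' (fun S e : Finset α ↦ S ⊆ e) (fun e he ↦ ?_) h
  obtain ⟨heW, her⟩ := mem_powersetCard.mp (hF he)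
  have hbelow :
      (W.powersetCard s).bipartiteBelow (fun S e : Finset α ↦ S ⊆ e) e = e.powersetCard s := by
    ext S
    simp only [mem_bipartiteBelow, mem_powersetCard]
    exact ⟨fun h ↦ ⟨h.2, h.1.2⟩, fun h ↦ ⟨⟨h.1.trans heW, h.2⟩, h.1⟩⟩
  rw [hbelow, card_powersetCard, her]

theorem exists_inter_eq_of_lt_card_filter_superset {W S : Finset α} {F : Finset (Finset α)}
    {r : ℕ} (hF : F ⊆ W.powersetCard r)
    (hS : (r - #S) * (#W).choose (r - #S - 1) < #{e ∈ F | S ⊆ e}) :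
    ∃ A ∈ F, ∃ B ∈ F, A ∩ B = S := by
  obtain ⟨A, hA⟩ : {e ∈ F | S ⊆ e}.Nonempty := card_pos.mp (by omega)
  rw [mem_filter] at hA
  have hAS : #(A \ S) = r - #S := by
    rw [card_sdiff_of_subset hA.2, (mem_powersetCard.mp (hF hA.1)).2]
  have hmeet : #{e ∈ F | S ⊆ e ∧ ¬Disjoint (A \ S) e} ≤ (r - #S) * (#W).choose (r - #S - 1) :=
    calc #{e ∈ F | S ⊆ e ∧ ¬Disjoint (A \ S) e}
        ≤ #((A \ S).biUnion fun z ↦ {e ∈ W.powersetCard r | insert z S ⊆ e}) := by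
          refine card_le_card fun e he ↦ ?_
          obtain ⟨heF, hSe, hAe⟩ := mem_filter.mp he
          obtain ⟨z, hzA, hze⟩ := not_disjoint_iff.mp hAe
          exact mem_biUnion.mpr ⟨z, hzA, mem_filter.mpr ⟨hF heF, insert_subset hze hSe⟩⟩
      _ ≤ ∑ z ∈ A \ S, #{e ∈ W.powersetCard r | insert z S ⊆ e} := card_biUnion_le
      _ ≤ ∑ _z ∈ A \ S, (#W).choose (r - #S - 1) := by
          refine sum_le_sum fun z hz ↦ ?_
          have := card_filter_powersetCard_superset_le (insert z S) W r
          rwa [card_insert_of_notMem (mem_sdiff.mp hz).2, ← Nat.sub_sub] at this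
      _ = (r - #S) * (#W).choose (r - #S - 1) := by rw [sum_const, hAS, smul_eq_mul]
  obtain ⟨B, hB, hBmeet⟩ := exists_mem_notMem_of_card_lt_card (hmeet.trans_lt hS)
  simp only [mem_filter, not_and, not_not] at hB hBmeet
  have hdisj := hBmeet hB.1 hB.2
  refine ⟨A, hA.1, B, hB.1, Subset.antisymm (fun u hu ↦ ?_) (subset_inter hA.2 hB.2)⟩
  by_contra huS
  exact disjoint_left.mp hdisj (mem_sdiff.mpr ⟨(mem_inter.mp hu).1, huS⟩) (mem_inter.mp hu).2

theorem exists_card_inter_eq_of_le_card {W : Finset α} {F : Finset (Finset α)} {r s : ℕ}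
    (hF : F ⊆ W.powersetCard r) (hsr : s < r) (hW : r ^ 2 ≤ #W)
    (hcard : 3 * (r + 1) * (#W).choose (r - 1) ≤ #F) :
    ∃ A ∈ F, ∃ B ∈ F, #(A ∩ B) = s := by
  obtain ⟨S, hS, hlarge⟩ := exists_lt_card_filter_superset hF <|
    (Nat.choose_mul_mul_choose_lt hsr hW).trans_le (Nat.mul_le_mul_right _ hcard)
  obtain ⟨-, rfl⟩ := mem_powersetCard.mp hS
  obtain ⟨A, hA, B, hB, hAB⟩ := exists_inter_eq_of_lt_card_filter_superset hF hlarge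
  exact ⟨A, hA, B, hB, by rw [hAB]⟩

end Finset

namespace Finset

variable {ι α : Type*} [DecidableEq ι] {f : ι → Finset α} {T : Finset ι}

theorem pairwiseDisjoint_insert_and_card_insert {i : ι}
    (hT : (T : Set ι).PairwiseDisjoint f) (hi : (f i).Nonempty)
    (h : ∀ j ∈ T, Disjoint (f i) (f j)) :
    ((insert i T : Finset ι) : Set ι).PairwiseDisjoint f ∧ #(insert i T) = #T + 1 := by
  have hiT : i ∉ T := fun hiT ↦ hi.ne_empty ((disjoint_self_iff_empty _).mp (h i hiT))
  refine ⟨?_, card_insert_of_notMem hiT⟩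
  rw [coe_insert]
  exact hT.insert fun j hj _ ↦ h j hj

theorem pairwiseDisjoint_exchange {p q₁ q₂ : ι} (hT : (T : Set ι).PairwiseDisjoint f)
    (hp : p ∈ T) (h₁ : ∀ q ∈ T.erase p, Disjoint (f q₁) (f q))
    (h₂ : ∀ q ∈ T.erase p, Disjoint (f q₂) (f q)) (h₁₂ : Disjoint (f q₁) (f q₂))
    (hq₁ : (f q₁).Nonempty) (hq₂ : (f q₂).Nonempty) :
    ((insert q₁ (insert q₂ (T.erase p)) : Finset ι) : Set ι).PairwiseDisjoint f ∧
      #(insert q₁ (insert q₂ (T.erase p))) = #T + 1 := by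
  obtain ⟨hT₂, hcard₂⟩ := pairwiseDisjoint_insert_and_card_insert
    (hT.subset (coe_subset.mpr (erase_subset p T))) hq₂ h₂
  obtain ⟨hT₁, hcard₁⟩ := pairwiseDisjoint_insert_and_card_insert hT₂ hq₁
    ((forall_mem_insert _ _ _).mpr ⟨h₁₂, h₁⟩)
  refine ⟨hT₁, ?_⟩
  rw [hcard₁, hcard₂, card_erase_of_mem hp, Nat.sub_add_cancel (card_pos.mpr ⟨p, hp⟩)]

theorem disjoint_insert_of_pairwiseDisjoint [DecidableEq α] {p q : ι} {x : α} {S : Finset α}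
    (hT : (T : Set ι).PairwiseDisjoint f) (hp : p ∈ T) (hq : q ∈ T.erase p) (hx : x ∈ f p)
    (hS : Disjoint S (T.biUnion f)) : Disjoint (insert x S) (f q) :=
  disjoint_insert_left.mpr
    ⟨disjoint_left.mp (hT hp (mem_of_mem_erase hq) (ne_of_mem_erase hq).symm) hx,
      hS.mono_right (subset_biUnion_of_mem f (mem_of_mem_erase hq))⟩

end Finset

namespace YTiling

variable {α : Type*} [DecidableEq α] {E : Finset (Finset α)} {b : ℕ}

/-- `#(link E v U (k - 1))` is the degree `deg(v, U)` of the paper. -/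
def link (E : Finset (Finset α)) (v : α) (W : Finset α) (r : ℕ) : Finset (Finset α) :=
  {T ∈ W.powersetCard r | insert v T ∈ E}

def IsCopy (E : Finset (Finset α)) (b : ℕ) (p : Finset α × Finset α) : Prop :=
  p.1 ∈ E ∧ p.2 ∈ E ∧ #(p.1 ∩ p.2) = b

theorem card_link_le_card_link_sdiff_add (E : Finset (Finset α)) (v : α) (W X : Finset α)
    (r : ℕ) : #(link E v W r) ≤ #(link E v (W \ X) r) + #X * (#W).choose (r - 1) :=
  calc #(link E v W r)
      ≤ #(link E v (W \ X) r ∪ X.biUnion fun z ↦ {T ∈ W.powersetCard r | {z} ⊆ T}) := by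
        refine card_le_card fun T hT ↦ ?_
        simp only [link, mem_filter, mem_powersetCard, mem_union, mem_biUnion,
          singleton_subset_iff] at hT ⊢
        by_cases hTX : Disjoint T X
        · exact .inl ⟨⟨subset_sdiff.mpr ⟨hT.1.1, hTX⟩, hT.1.2⟩, hT.2⟩
        · obtain ⟨z, hzT, hzX⟩ := not_disjoint_iff.mp hTX
          exact .inr ⟨z, hzX, hT.1, hzT⟩
    _ ≤ #(link E v (W \ X) r) + ∑ z ∈ X, #{T ∈ W.powersetCard r | {z} ⊆ T} :=
        (card_union_le _ _).trans (Nat.add_le_add_left card_biUnion_le _)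
    _ ≤ #(link E v (W \ X) r) + ∑ _z ∈ X, (#W).choose (r - 1) := by
        gcongr with z
        simpa using card_filter_powersetCard_superset_le {z} W r
    _ = #(link E v (W \ X) r) + #X * (#W).choose (r - 1) := by rw [sum_const, smul_eq_mul]

theorem exists_isCopy_insert_of_le_card_link {v : α} {W : Finset α} {k : ℕ}
    (hb : 1 ≤ b) (hbk : b < k) (hv : v ∉ W) (hW : (k - 1) ^ 2 ≤ #W)
    (hdeg : 3 * k * (#W).choose (k - 2) ≤ #(link E v W (k - 1))) :
    ∃ A B, A ∪ B ⊆ W ∧ #(A ∪ B) = 2 * k - b - 1 ∧ IsCopy E b (insert v A, insert v B) := by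
  obtain ⟨A, hA, B, hB, hAB⟩ := exists_card_inter_eq_of_le_card (s := b - 1) (filter_subset _ _)
    (by omega) hW (by rwa [show k - 1 + 1 = k by omega, show k - 1 - 1 = k - 2 by omega])
  simp only [mem_filter, mem_powersetCard] at hA hB
  have hvAB : v ∉ A ∩ B := fun h ↦ hv (hA.1.1 (mem_inter.mp h).1)
  refine ⟨A, B, union_subset hA.1.1 hB.1.1, ?_, hA.2, hB.2, ?_⟩
  · have := card_union_add_card_inter A B
    omega
  · rw [← insert_inter_distrib, card_insert_of_notMem hvAB, hAB]
    omega


theorem exists_isCopy_insert_sdiff_of_le_card_link {v : α} {U X : Finset α} {k c : ℕ}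
    (hb : 1 ≤ b) (hbk : b < k) (hv : v ∉ U) (hU : (k - 1) ^ 2 + #X ≤ #U)
    (hc : 3 * k + #X ≤ c) (hdeg : c * (#U).choose (k - 2) ≤ #(link E v U (k - 1))) :
    ∃ A B, A ∪ B ⊆ U \ X ∧ #(A ∪ B) = 2 * k - b - 1 ∧ IsCopy E b (insert v A, insert v B) := by
  have hloss := card_link_le_card_link_sdiff_add E v U X (k - 1)
  rw [show k - 1 - 1 = k - 2 by omega] at hloss
  have hchoose := Nat.choose_le_choose (k - 2) (card_le_card (sdiff_subset : U \ X ⊆ U))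
  have hc' := Nat.mul_le_mul_right ((#U).choose (k - 2)) hc
  refine exists_isCopy_insert_of_le_card_link hb hbk (fun h ↦ hv (sdiff_subset h))
    (by have := le_card_sdiff X U; omega) ?_
  nlinarith

def IsTiling (E : Finset (Finset α)) (b : ℕ) (T : Finset (Finset α × Finset α)) : Prop :=
  (∀ p ∈ T, IsCopy E b p) ∧ (T : Set (Finset α × Finset α)).PairwiseDisjoint fun p ↦ p.1 ∪ p.2

theorem IsTiling.exchange {T : Finset (Finset α × Finset α)} (hT : IsTiling E b T)
    {p : Finset α × Finset α} (hp : p ∈ T) {x y : α} (hx : x ∈ p.1 ∪ p.2) (hy : y ∈ p.1 ∪ p.2)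
    (hxy : x ≠ y) {A₁ B₁ A₂ B₂ : Finset α} (hq₁ : IsCopy E b (insert x A₁, insert x B₁))
    (hq₂ : IsCopy E b (insert y A₂, insert y B₂))
    (hS₁ : Disjoint (A₁ ∪ B₁) (T.biUnion fun p ↦ p.1 ∪ p.2))
    (hS₂ : Disjoint (A₂ ∪ B₂) (T.biUnion fun p ↦ p.1 ∪ p.2))
    (hS₁₂ : Disjoint (A₁ ∪ B₁) (A₂ ∪ B₂)) :
    ∃ T', IsTiling E b T' ∧ #T' = #T + 1 := by
  have hpd : (T : Set (Finset α × Finset α)).PairwiseDisjoint fun p ↦ p.1 ∪ p.2 := hT.2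
  have hcov : ∀ z ∈ p.1 ∪ p.2, z ∈ T.biUnion fun p ↦ p.1 ∪ p.2 :=
    fun z hz ↦ mem_biUnion.mpr ⟨p, hp, hz⟩
  have h₁ : ∀ q ∈ T.erase p, Disjoint (insert x A₁ ∪ insert x B₁) (q.1 ∪ q.2) := fun q hq ↦ by
    rw [← insert_union_distrib]
    exact (disjoint_insert_of_pairwiseDisjoint hpd hp hq hx hS₁ :)
  have h₂ : ∀ q ∈ T.erase p, Disjoint (insert y A₂ ∪ insert y B₂) (q.1 ∪ q.2) := fun q hq ↦ by
    rw [← insert_union_distrib]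
    exact (disjoint_insert_of_pairwiseDisjoint hpd hp hq hy hS₂ :)
  have h₁₂ : Disjoint (insert x A₁ ∪ insert x B₁) (insert y A₂ ∪ insert y B₂) := by
    simp only [← insert_union_distrib, disjoint_insert_left, disjoint_insert_right, mem_insert,
      not_or]
    exact ⟨⟨hxy.symm, fun h ↦ disjoint_left.mp hS₁ h (hcov y hy)⟩,
      fun h ↦ disjoint_left.mp hS₂ h (hcov x hx), hS₁₂⟩
  obtain ⟨hdisj, hcard⟩ := pairwiseDisjoint_exchange (f := fun p ↦ p.1 ∪ p.2)
    (q₁ := (insert x A₁, insert x B₁)) (q₂ := (insert y A₂, insert y B₂)) hpd hp h₁ h₂ h₁₂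
    ⟨x, mem_union_left _ (mem_insert_self x A₁)⟩ ⟨y, mem_union_left _ (mem_insert_self y A₂)⟩
  refine ⟨_, ⟨?_, hdisj⟩, hcard⟩
  simp only [forall_mem_insert]
  exact ⟨hq₁, hq₂, fun q hq ↦ hT.1 q (mem_of_mem_erase hq)⟩

end YTiling

open YTiling in
theorem max_tiling_at_most_one_large_degree_vertex_general
    {V : Type*} [Fintype V] [DecidableEq V]
    (k b : ℕ) (hb1 : 1 ≤ b) (hbk : b < k)
    (E : Finset (Finset V))
    (𝒴 : Finset (Finset V × Finset V))
    (h𝒴 : ∀ p ∈ 𝒴, p.1 ∈ E ∧ p.2 ∈ E ∧ (p.1 ∩ p.2).card = b)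
    (h𝒴disj : ∀ p ∈ 𝒴, ∀ q ∈ 𝒴, p ≠ q → Disjoint (p.1 ∪ p.2) (q.1 ∪ q.2))
    (hmax : ∀ T : Finset (Finset V × Finset V),
      (∀ p ∈ T, p.1 ∈ E ∧ p.2 ∈ E ∧ (p.1 ∩ p.2).card = b) →
      (∀ p ∈ T, ∀ q ∈ T, p ≠ q → Disjoint (p.1 ∪ p.2) (q.1 ∪ q.2)) →
      T.card ≤ 𝒴.card)
    (U : Finset V) (hU : U = Finset.univ \ 𝒴.biUnion (fun p => p.1 ∪ p.2))
    (hUcard : 2 * (2 * k - b) ^ 2 ≤ U.card)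
    (C : Finset V)
    (hC : C = (𝒴.biUnion (fun p => p.1 ∪ p.2)).filter (fun v =>
      (2 * k - b) ^ 2 * U.card.choose (k - 2) ≤
        ((U.powersetCard (k - 1)).filter (fun T => insert v T ∈ E)).card)) :
    ∀ p ∈ 𝒴, ((p.1 ∪ p.2) ∩ C).card ≤ 1 := by
  intro p hp
  by_contra! hpC
  obtain ⟨x, hx, y, hy, hxy⟩ := one_lt_card.mp hpC
  simp only [hC, mem_inter, mem_filter] at hx hy
  have hUcov : Disjoint U (𝒴.biUnion fun p ↦ p.1 ∪ p.2) := hU ▸ sdiff_disjoint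
  obtain ⟨m, hm, hkm⟩ : ∃ m, 2 * k - b = m ∧ k + 1 ≤ m := ⟨_, rfl, by omega⟩
  rw [hm] at hUcard hx hy
  have h3k : 3 * k + (m - 1) ≤ m ^ 2 := by
    obtain ⟨n, rfl⟩ : ∃ n, m = n + 1 := ⟨m - 1, by omega⟩
    rw [Nat.add_sub_cancel]
    nlinarith
  have hkU : (k - 1) ^ 2 + (m - 1) ≤ #U := by
    have := Nat.pow_le_pow_left (show k - 1 ≤ m by omega) 2
    have := Nat.le_self_pow two_ne_zero m
    omega
  obtain ⟨A₁, B₁, hAB₁, hcard₁, hq₁⟩ := exists_isCopy_insert_sdiff_of_le_card_link (X := ∅)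
    hb1 hbk (disjoint_right.mp hUcov hx.2.1) (by rw [card_empty]; omega)
    (by rw [card_empty]; omega) hx.2.2
  obtain ⟨A₂, B₂, hAB₂, -, hq₂⟩ := exists_isCopy_insert_sdiff_of_le_card_link (X := A₁ ∪ B₁)
    hb1 hbk (disjoint_right.mp hUcov hy.2.1) (by omega) (by omega) hy.2.2
  rw [sdiff_empty] at hAB₁
  obtain ⟨T, hT, hTcard⟩ := IsTiling.exchange ⟨h𝒴, h𝒴disj⟩ hp hx.1 hy.1 hxy hq₁ hq₂
    (hUcov.mono_left hAB₁) (hUcov.mono_left (hAB₂.trans sdiff_subset))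
    (disjoint_of_subset_right hAB₂ disjoint_sdiff)
  have := hmax T hT.1 hT.2
  omega

/-- If `𝒴` is a maximum `Y_{k,b}`-tiling of a `k`-graph `H`, `U` the set of uncovered
vertices with `|U| ≥ 2(2k−b)²`, and `C` the set of covered vertices `v` with
`deg(v,U) ≥ (2k−b)²·C(|U|, k−2)`, then every member of `𝒴` contains at most one vertex
of `C`.  Copies of `Y_{k,b}` are recorded as pairs of edges sharing exactly `b`
vertices. -/
theorem max_tiling_at_most_one_large_degree_vertex
    {V : Type*} [Fintype V] [DecidableEq V]
    (k b : ℕ) (hk : 3 ≤ k) (hb1 : 1 ≤ b) (hbk : b < k)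
    (E : Finset (Finset V)) (hE : ∀ e ∈ E, e.card = k)
    (𝒴 : Finset (Finset V × Finset V))
    (h𝒴 : ∀ p ∈ 𝒴, p.1 ∈ E ∧ p.2 ∈ E ∧ (p.1 ∩ p.2).card = b)
    (h𝒴disj : ∀ p ∈ 𝒴, ∀ q ∈ 𝒴, p ≠ q → Disjoint (p.1 ∪ p.2) (q.1 ∪ q.2))
    (hmax : ∀ T : Finset (Finset V × Finset V),
      (∀ p ∈ T, p.1 ∈ E ∧ p.2 ∈ E ∧ (p.1 ∩ p.2).card = b) →
      (∀ p ∈ T, ∀ q ∈ T, p ≠ q → Disjoint (p.1 ∪ p.2) (q.1 ∪ q.2)) →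
      T.card ≤ 𝒴.card)
    (U : Finset V) (hU : U = Finset.univ \ 𝒴.biUnion (fun p => p.1 ∪ p.2))
    (hUcard : 2 * (2 * k - b) ^ 2 ≤ U.card)
    (C : Finset V)
    (hC : C = (𝒴.biUnion (fun p => p.1 ∪ p.2)).filter (fun v =>
      (2 * k - b) ^ 2 * U.card.choose (k - 2) ≤
        ((U.powersetCard (k - 1)).filter (fun T => insert v T ∈ E)).card)) :
    ∀ p ∈ 𝒴, ((p.1 ∪ p.2) ∩ C).card ≤ 1 :=
  max_tiling_at_most_one_large_degree_vertex_general k b hb1 hbk E 𝒴 h𝒴 h𝒴disj hmax U hU hUcard C hC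
end

section
/- Let k ≥ 3 and 1 ≤ ℓ < k/2, and let H be a k-graph with vertex partition V = A ∪ B, where |B| = ⌊(2k−2ℓ−1)n/(2(k−ℓ))⌋ and n = |V|, chosen so that e(B) is minimum among all such partitions. Define B' = {v ∈ V : deg(v,B) ≤ ε₁·C(|B|, k−1)} and A' = {v ∈ V : deg(v,B) ≥ (1−ε₁)·C(|B|, k−1)} for a constant 0 < ε₁ < 1/2. Then: if A ∩ B' ≠ ∅ then B ⊆ B', and if B ∩ A' ≠ ∅ then A ⊆ A'. -/
/-!
For `k`-uniform `E` and `b ∈ X`, `e(X) = e(X \ {b}) + deg(b, X)`. Swapping `b ∈ B` for `a ∉ B`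
therefore turns `e(B)` into at most `e(B) - deg(b, B) + deg(a, B)`, so minimality of `e(B)`
gives `deg(b, B) ≤ deg(a, B)` for all `a ∈ A`, `b ∈ B`. Both implications follow at once: a vertex
of `A` of small degree bounds every degree from `B`, and a vertex of `B` of large degree bounds
every degree from `A` from below.
-/

open Finset

/-- The degree of `v` into `B`: the number of `(k−1)`-subsets `S` of `B \ {v}` with
`{v} ∪ S` an edge. -/
def degInto {V : Type*} [DecidableEq V] (E : Finset (Finset V)) (k : ℕ)
    (v : V) (B : Finset V) : ℕ :=
  (((B.erase v).powersetCard (k - 1)).filter (fun S => insert v S ∈ E)).card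

section Hypergraph

variable {V : Type*} [DecidableEq V] (E : Finset (Finset V)) (k : ℕ)

lemma degInto_mono (v : V) {X Y : Finset V} (hXY : X ⊆ Y) :
    degInto E k v X ≤ degInto E k v Y :=
  card_le_card <| filter_subset_filter _ <| powersetCard_mono <| erase_subset_erase v hXY

lemma degInto_insert_self (v : V) (X : Finset V) :
    degInto E k v (insert v X) = degInto E k v X := by
  simp only [degInto, erase_insert_eq_erase]

variable {E k}

lemma card_filter_subset_eq_add_degInto (hEk : ∀ e ∈ E, e.card = k) {b : V} {X : Finset V}
    (hb : b ∈ X) :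
    (E.filter (· ⊆ X)).card = (E.filter (· ⊆ X.erase b)).card + degInto E k b X := by
  have hwithout : (E.filter (· ⊆ X)).filter (b ∉ ·) = E.filter (· ⊆ X.erase b) := by
    rw [filter_filter]
    exact filter_congr fun e _ => by rw [subset_erase]
  have hthrough : ((E.filter (· ⊆ X)).filter (b ∈ ·)).card = degInto E k b X := by
    refine card_nbij' (·.erase b) (insert b) ?_ ?_ ?_ ?_
    · intro e he
      simp only [mem_coe, mem_filter, mem_powersetCard] at he ⊢
      obtain ⟨⟨heE, heX⟩, hbe⟩ := he
      refine ⟨⟨erase_subset_erase b heX, ?_⟩, by rwa [insert_erase hbe]⟩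
      rw [card_erase_of_mem hbe, hEk e heE]
    · intro S hS
      simp only [mem_coe, mem_filter, mem_powersetCard] at hS ⊢
      obtain ⟨⟨hSX, -⟩, hSE⟩ := hS
      exact ⟨⟨hSE, insert_subset hb (hSX.trans (erase_subset b X))⟩, mem_insert_self b S⟩
    · intro e he
      exact insert_erase (mem_filter.1 he).2
    · intro S hS
      have hbS : b ∉ S := fun h =>
        (mem_erase.1 ((mem_powersetCard.1 (mem_filter.1 hS).1).1 h)).1 rfl
      exact erase_insert hbS
  rw [← hwithout, ← hthrough, add_comm]
  exact (card_filter_add_card_filter_not _).symm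

lemma degInto_le_of_min_card_filter_subset (hEk : ∀ e ∈ E, e.card = k) {B : Finset V}
    (hmin : ∀ B'' : Finset V, B''.card = B.card →
      (E.filter (· ⊆ B)).card ≤ (E.filter (· ⊆ B'')).card)
    {a b : V} (ha : a ∉ B) (hb : b ∈ B) :
    degInto E k b B ≤ degInto E k a B := by
  have ha_erase : a ∉ B.erase b := fun h => ha (mem_of_mem_erase h)
  have hswap_card : (insert a (B.erase b)).card = B.card := by
    rw [card_insert_of_notMem ha_erase, card_erase_add_one hb]
  have hB := card_filter_subset_eq_add_degInto hEk hb
  have hswap := card_filter_subset_eq_add_degInto hEk (mem_insert_self a (B.erase b))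
  rw [erase_insert ha_erase] at hswap
  have hdeg : degInto E k a (insert a (B.erase b)) ≤ degInto E k a B := by
    rw [← degInto_insert_self E k a B]
    exact degInto_mono E k a (insert_subset_insert a (erase_subset b B))
  have := hmin (insert a (B.erase b)) hswap_card
  omega

end Hypergraph

theorem min_partition_classification_general
    {V : Type*} [Fintype V] [DecidableEq V]
    (k : ℕ)
    (E : Finset (Finset V)) (hEk : ∀ e ∈ E, e.card = k)
    (A B : Finset V) (hdisj : Disjoint A B)
    (hmin : ∀ B'' : Finset V, B''.card = B.card →
      ((E.filter (fun e => e ⊆ B)).card ≤ (E.filter (fun e => e ⊆ B'')).card))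
    (ε₁ : ℝ)
    (A' B' : Finset V)
    (hA' : A' = Finset.univ.filter (fun v =>
      (1 - ε₁) * (B.card.choose (k - 1) : ℝ) ≤ (degInto E k v B : ℝ)))
    (hB' : B' = Finset.univ.filter (fun v =>
      (degInto E k v B : ℝ) ≤ ε₁ * (B.card.choose (k - 1) : ℝ))) :
    ((A ∩ B').Nonempty → B ⊆ B') ∧ ((B ∩ A').Nonempty → A ⊆ A') := by
  have hdeg {a b : V} (ha : a ∈ A) (hb : b ∈ B) : (degInto E k b B : ℝ) ≤ degInto E k a B := by
    exact_mod_cast degInto_le_of_min_card_filter_subset hEk hmin (disjoint_left.1 hdisj ha) hb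
  constructor
  · rintro ⟨a, ha⟩ b hb
    rw [mem_inter, hB', mem_filter] at ha
    rw [hB', mem_filter]
    exact ⟨mem_univ b, (hdeg ha.1 hb).trans ha.2.2⟩
  · rintro ⟨b, hb⟩ a ha
    rw [mem_inter, hA', mem_filter] at hb
    rw [hA', mem_filter]
    exact ⟨mem_univ a, hb.2.2.trans (hdeg ha hb.1)⟩

/-- For a minimal partition `V = A ∪ B` with `|B| = ⌊(2k−2ℓ−1)n/(2(k−ℓ))⌋` (minimizing
`e(B)`), letting `B'` (resp. `A'`) be the vertices of degree at most `ε₁C(|B|,k−1)`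
(resp. at least `(1−ε₁)C(|B|,k−1)`) into `B`: if `A ∩ B' ≠ ∅` then `B ⊆ B'`, and if
`B ∩ A' ≠ ∅` then `A ⊆ A'`. -/
theorem min_partition_classification
    {V : Type*} [Fintype V] [DecidableEq V]
    (k l n : ℕ) (hk : 3 ≤ k) (hl : 1 ≤ l) (hlk : 2 * l < k)
    (hn : Fintype.card V = n)
    (E : Finset (Finset V)) (hEk : ∀ e ∈ E, e.card = k)
    (A B : Finset V) (hAB : A ∪ B = Finset.univ) (hdisj : Disjoint A B)
    (hBcard : B.card = (2 * k - 2 * l - 1) * n / (2 * (k - l)))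
    (hmin : ∀ B'' : Finset V, B''.card = B.card →
      ((E.filter (fun e => e ⊆ B)).card ≤ (E.filter (fun e => e ⊆ B'')).card))
    (ε₁ : ℝ) (hε₁ : 0 < ε₁) (hε₁' : ε₁ < 1 / 2)
    (A' B' : Finset V)
    (hA' : A' = Finset.univ.filter (fun v =>
      (1 - ε₁) * (B.card.choose (k - 1) : ℝ) ≤ (degInto E k v B : ℝ)))
    (hB' : B' = Finset.univ.filter (fun v =>
      (degInto E k v B : ℝ) ≤ ε₁ * (B.card.choose (k - 1) : ℝ))) :
    ((A ∩ B').Nonempty → B ⊆ B') ∧ ((B ∩ A').Nonempty → A ⊆ A') :=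
  min_partition_classification_general k E hEk A B hdisj hmin ε₁ A' B' hA' hB'
end

section
/- Let H be a k-graph on n vertices with a set B ⊆ V(H) such that e(B) ≤ ε₀·C(|B|,k). Call an ℓ-set L ⊆ B atypical if deg(L,B) > ε₁·C(|B|, k−ℓ), where ε₁ = ε₀^{1/3}. Then the number of atypical ℓ-sets contained in B is at most 2·(ε₀/ε₁)·C(k,ℓ)·C(|B|−k+ℓ, ℓ), which in particular is at most ε₂·C(|B|,ℓ) where ε₂ = 2ε₁². -/
/-!
Summing `deg(L,B)` over all `ℓ`-subsets `L ⊆ B` counts pairs `(L, e)` with `e` an edge inside `B`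
and `L ⊆ e`, so the sum is at most `e(B)·C(k,ℓ) ≤ ε₀·C(|B|,k)·C(k,ℓ) = ε₀·C(|B|,k-ℓ)·C(|B|-k+ℓ,ℓ)`.
Each atypical set contributes more than `ε₁·C(|B|,k-ℓ)`, so there are at most
`(ε₀/ε₁)·C(|B|-k+ℓ,ℓ)` of them, and `ε₀/ε₁ = ε₁²`.
-/

open Finset

theorem Nat.choose_mul_choose_eq_choose_sub_mul {n k l : ℕ} (hlk : l ≤ k) (hkn : k ≤ n) :
    n.choose k * k.choose l = n.choose (k - l) * (n - k + l).choose l := by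
  rw [← Nat.choose_symm hlk, Nat.choose_mul (Nat.sub_le k l), Nat.sub_sub_self hlk,
    Nat.sub_sub_right _ hlk, Nat.sub_add_comm hkn]

theorem Finset.card_filter_lt_mul_le_sum {ι : Type*} (s : Finset ι) {f : ι → ℝ}
    (hf : ∀ i ∈ s, 0 ≤ f i) (t : ℝ) : (#{i ∈ s | t < f i} : ℝ) * t ≤ ∑ i ∈ s, f i := by
  calc (#{i ∈ s | t < f i} : ℝ) * t
      ≤ ∑ i ∈ s with t < f i, f i := by
        rw [← nsmul_eq_mul]
        exact card_nsmul_le_sum _ _ _ fun i hi => (mem_filter.1 hi).2.le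
    _ ≤ ∑ i ∈ s, f i :=
        sum_le_sum_of_subset_of_nonneg (filter_subset _ _) fun i hi _ => hf i hi

namespace Hypergraph

variable {V : Type*} [DecidableEq V]

/-- The paper's `deg(L,B)` is `linkDegree E B L (k - ℓ)`. -/
def linkDegree (E : Finset (Finset V)) (B L : Finset V) (r : ℕ) : ℕ :=
  #{T ∈ (B \ L).powersetCard r | L ∪ T ∈ E}

noncomputable def atypicalSets (E : Finset (Finset V)) (B : Finset V) (k l : ℕ) (ε₁ : ℝ) :
    Finset (Finset V) :=
  {L ∈ B.powersetCard l | ε₁ * ((#B).choose (k - l) : ℝ) < linkDegree E B L (k - l)}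

theorem linkDegree_le_card_superset (E : Finset (Finset V)) {B L : Finset V} (hL : L ⊆ B)
    (r : ℕ) : linkDegree E B L r ≤ #{e ∈ {e ∈ E | e ⊆ B} | L ⊆ e} := by
  refine card_le_card_of_injOn (L ∪ ·) ?_ ?_
  · intro T hT
    simp only [mem_coe, mem_filter, mem_powersetCard] at hT ⊢
    exact ⟨⟨hT.2, union_subset hL (hT.1.1.trans sdiff_subset)⟩, subset_union_left⟩
  · intro T hT T' hT' hLT
    simp only [mem_coe, mem_filter, mem_powersetCard, subset_sdiff] at hT hT'
    have hdiff := congrArg (· \ L) hLT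
    simp only [union_sdiff_left] at hdiff
    rwa [hT.1.1.2.sdiff_eq_left, hT'.1.1.2.sdiff_eq_left] at hdiff

theorem sum_linkDegree_le (k l : ℕ) {E : Finset (Finset V)} (hEk : ∀ e ∈ E, #e = k)
    (B : Finset V) :
    ∑ L ∈ B.powersetCard l, linkDegree E B L (k - l) ≤ #{e ∈ E | e ⊆ B} * k.choose l := by
  calc ∑ L ∈ B.powersetCard l, linkDegree E B L (k - l)
      ≤ ∑ L ∈ B.powersetCard l, #(bipartiteAbove (· ⊆ ·) {e ∈ E | e ⊆ B} L) :=
        sum_le_sum fun L hL => linkDegree_le_card_superset E (mem_powersetCard.1 hL).1 _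
    _ = ∑ e ∈ {e ∈ E | e ⊆ B}, #(bipartiteBelow (· ⊆ ·) (B.powersetCard l) e) :=
        sum_card_bipartiteAbove_eq_sum_card_bipartiteBelow _
    _ ≤ ∑ _e ∈ {e ∈ E | e ⊆ B}, k.choose l := by
        refine sum_le_sum fun e he => ?_
        rw [← hEk e (mem_filter.1 he).1, ← card_powersetCard]
        refine card_le_card fun L hL => ?_
        simp only [bipartiteBelow, mem_filter, mem_powersetCard] at hL ⊢
        exact ⟨hL.2, hL.1.2⟩
    _ = #{e ∈ E | e ⊆ B} * k.choose l := by rw [sum_const, smul_eq_mul]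

theorem card_atypicalSets_le {k l : ℕ} (hlk : l ≤ k) {E : Finset (Finset V)}
    (hEk : ∀ e ∈ E, #e = k) {B : Finset V} (hkB : k ≤ #B) {ε₀ ε₁ : ℝ} (hε₁ : 0 < ε₁)
    (heB : (#{e ∈ E | e ⊆ B} : ℝ) ≤ ε₀ * (#B).choose k) :
    (#(atypicalSets E B k l ε₁) : ℝ) ≤ ε₀ / ε₁ * (#B - k + l).choose l := by
  set C := ((#B).choose (k - l) : ℝ)
  have hC : 0 < C := Nat.cast_pos.2 (Nat.choose_pos ((Nat.sub_le k l).trans hkB))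
  have hsum : (#(atypicalSets E B k l ε₁) : ℝ) * (ε₁ * C) ≤ ε₀ * C * (#B - k + l).choose l :=
    calc (#(atypicalSets E B k l ε₁) : ℝ) * (ε₁ * C)
        ≤ ∑ L ∈ B.powersetCard l, (linkDegree E B L (k - l) : ℝ) :=
          card_filter_lt_mul_le_sum _ (fun _ _ => Nat.cast_nonneg _) _
      _ ≤ #{e ∈ E | e ⊆ B} * k.choose l := by exact_mod_cast sum_linkDegree_le k l hEk B
      _ ≤ ε₀ * (#B).choose k * k.choose l := by gcongr
      _ = ε₀ * C * (#B - k + l).choose l := by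
          rw [mul_assoc, ← Nat.cast_mul, Nat.choose_mul_choose_eq_choose_sub_mul hlk hkB]
          push_cast; ring
  rw [div_mul_eq_mul_div, le_div_iff₀ hε₁]
  nlinarith

end Hypergraph

theorem atypical_lsets_count_general
    {V : Type*} [DecidableEq V]
    (k l : ℕ) (hlk : l < k)
    (E : Finset (Finset V)) (hEk : ∀ e ∈ E, e.card = k)
    (B : Finset V) (hkB : k ≤ B.card)
    (ε₀ ε₁ ε₂ : ℝ) (hε₀ : 0 < ε₀)
    (hε₁ : ε₁ = ε₀ ^ ((1 : ℝ) / 3)) (hε₂ : ε₂ = 2 * ε₁ ^ 2)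
    (heB : ((E.filter (fun e => e ⊆ B)).card : ℝ) ≤ ε₀ * (B.card.choose k : ℝ)) :
    (((B.powersetCard l).filter (fun L =>
        ε₁ * (B.card.choose (k - l) : ℝ) <
          ((((B \ L).powersetCard (k - l)).filter (fun T => L ∪ T ∈ E)).card : ℝ))).card
        : ℝ) ≤ 2 * (ε₀ / ε₁) * (k.choose l : ℝ) * ((B.card - k + l).choose l : ℝ) ∧
    (((B.powersetCard l).filter (fun L =>
        ε₁ * (B.card.choose (k - l) : ℝ) <
          ((((B \ L).powersetCard (k - l)).filter (fun T => L ∪ T ∈ E)).card : ℝ))).card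
        : ℝ) ≤ ε₂ * (B.card.choose l : ℝ) := by
  have hε₁pos : 0 < ε₁ := hε₁ ▸ Real.rpow_pos_of_pos hε₀ _
  have hcount := Hypergraph.card_atypicalSets_le hlk.le hEk hkB hε₁pos heB
  have hratio : ε₀ / ε₁ = ε₁ ^ 2 := by
    rw [div_eq_iff hε₁pos.ne', hε₁, ← pow_succ, ← Real.rpow_natCast, ← Real.rpow_mul hε₀.le]
    norm_num
  have hkl : (1 : ℝ) ≤ k.choose l := by exact_mod_cast Nat.choose_pos hlk.le
  have hsub : ((B.card - k + l).choose l : ℝ) ≤ B.card.choose l := by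
    exact_mod_cast Nat.choose_le_choose l (by omega)
  refine ⟨hcount.trans ?_, hcount.trans ?_⟩
  · have hbound_nonneg : 0 ≤ ε₀ / ε₁ * (B.card - k + l).choose l := by positivity
    nlinarith
  · rw [hratio, hε₂]
    nlinarith [sq_nonneg ε₁, (Nat.cast_nonneg _ : (0 : ℝ) ≤ (B.card - k + l).choose l)]

/-- If `e(B) ≤ ε₀·C(|B|,k)`, then the number of atypical `ℓ`-subsets `L` of `B`
(those with `deg(L,B) > ε₁·C(|B|,k−ℓ)`, where `ε₁ = ε₀^{1/3}`) is at most
`2(ε₀/ε₁)·C(k,ℓ)·C(|B|−k+ℓ,ℓ)`, and in particular at most `ε₂·C(|B|,ℓ)` where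
`ε₂ = 2ε₁²`. -/
theorem atypical_lsets_count
    {V : Type*} [Fintype V] [DecidableEq V]
    (k l : ℕ) (hl : 1 ≤ l) (hlk : l < k)
    (E : Finset (Finset V)) (hEk : ∀ e ∈ E, e.card = k)
    (B : Finset V) (hkB : k ≤ B.card)
    (ε₀ ε₁ ε₂ : ℝ) (hε₀ : 0 < ε₀) (hε₀1 : ε₀ < 1)
    (hε₁ : ε₁ = ε₀ ^ ((1 : ℝ) / 3)) (hε₂ : ε₂ = 2 * ε₁ ^ 2)
    (heB : ((E.filter (fun e => e ⊆ B)).card : ℝ) ≤ ε₀ * (B.card.choose k : ℝ)) :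
    (((B.powersetCard l).filter (fun L =>
        ε₁ * (B.card.choose (k - l) : ℝ) <
          ((((B \ L).powersetCard (k - l)).filter (fun T => L ∪ T ∈ E)).card : ℝ))).card
        : ℝ) ≤ 2 * (ε₀ / ε₁) * (k.choose l : ℝ) * ((B.card - k + l).choose l : ℝ) ∧
    (((B.powersetCard l).filter (fun L =>
        ε₁ * (B.card.choose (k - l) : ℝ) <
          ((((B \ L).powersetCard (k - l)).filter (fun T => L ∪ T ∈ E)).card : ℝ))).card
        : ℝ) ≤ ε₂ * (B.card.choose l : ℝ) :=
  atypical_lsets_count_general k l hlk E hEk B hkB ε₀ ε₁ ε₂ hε₀ hε₁ hε₂ heB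
end
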